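/- Let φ : Γ₂ → Γ₁ be a non-constant harmonic morphism of connected graphs with pullback arithmetical structures. The pullback φ* induces an injective group homomorphism from K(Γ₁; R₁, S₁) into K(Γ₂; R₂, S₂): if ξ is a degree-0 divisor on Γ₁ such that D_μΦξ = L₂f for some integer vector f, then ξ is itself principal on Γ₁. -/

import Mathlib

open Matrix Finset

section Defs

variable {V V₁ V₂ : Type*}

/-- The zero-one vertex map matrix of a vertex map `φ`. -/
def vertexMapMatrix [DecidableEq V₁] (φ : V₂ → V₁) : Matrix V₂ V₁ ℤ :=
  Matrix.of fun v x => if φ v = x then 1 else 0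

/-- A graph morphism: each edge collapses to a vertex or maps to an edge. -/
def IsGraphMorphism (G₂ : SimpleGraph V₂) (G₁ : SimpleGraph V₁) (φ : V₂ → V₁) : Prop :=
  ∀ ⦃v w⦄, G₂.Adj v w → φ v = φ w ∨ G₁.Adj (φ v) (φ w)

/-- The vertical multiplicity `ν(v)`: number of vertical edges incident to `v`. -/
def vertMult [Fintype V₂] [DecidableEq V₁] (G₂ : SimpleGraph V₂) [DecidableRel G₂.Adj]
    (φ : V₂ → V₁) (v : V₂) : ℕ :=
  (Finset.univ.filter fun w => G₂.Adj v w ∧ φ w = φ v).card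

/-- Local horizontal multiplicity `μ_φ(v,x)`: number of edges at `v` mapping to the
edge `(φ v, x)`. -/
def locHorizMult [Fintype V₂] [DecidableEq V₁] (G₂ : SimpleGraph V₂) [DecidableRel G₂.Adj]
    (φ : V₂ → V₁) (v : V₂) (x : V₁) : ℕ :=
  (Finset.univ.filter fun w => G₂.Adj v w ∧ φ w = x).card

/-- `φ` is a harmonic morphism with horizontal multiplicity function `μ`. -/
def IsHarmonicMorphism [Fintype V₂] [DecidableEq V₁] (G₂ : SimpleGraph V₂)
    [DecidableRel G₂.Adj] (G₁ : SimpleGraph V₁) (φ : V₂ → V₁) (μ : V₂ → ℕ) : Prop :=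
  IsGraphMorphism G₂ G₁ φ ∧ ∀ v x, G₁.Adj (φ v) x → locHorizMult G₂ φ v x = μ v

/-- `d` is the degree of `φ`: every edge of `Γ₁` has exactly `d` preimage edges. -/
def IsDegreeOf [Fintype V₂] [DecidableEq V₁] (G₂ : SimpleGraph V₂) [DecidableRel G₂.Adj]
    (G₁ : SimpleGraph V₁) (φ : V₂ → V₁) (d : ℕ) : Prop :=
  ∀ ⦃x y⦄, G₁.Adj x y →
    (Finset.univ.filter fun p : V₂ × V₂ => G₂.Adj p.1 p.2 ∧ φ p.1 = x ∧ φ p.2 = y).card = d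

/-- The arithmetical Laplacian `L = Diag(S) − A`. -/
def arithLaplacian [Fintype V] [DecidableEq V] (G : SimpleGraph V) [DecidableRel G.Adj]
    (S : V → ℤ) : Matrix V V ℤ :=
  Matrix.diagonal S - G.adjMatrix ℤ

/-- An arithmetical structure `(R,S)` on `G`. -/
def IsArithStructure [Fintype V] [DecidableEq V] (G : SimpleGraph V) [DecidableRel G.Adj]
    (R S : V → ℤ) : Prop :=
  (∀ v, 0 < R v) ∧ (∀ v, 0 < S v) ∧ Finset.univ.gcd R = 1 ∧
    arithLaplacian G S *ᵥ R = 0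

end Defs

section Crit

variable {V : Type*}

/-- Degree-zero divisors with respect to `R`. -/
def Div0 [Fintype V] (R : V → ℤ) : AddSubgroup (V → ℤ) where
  carrier := {δ | R ⬝ᵥ δ = 0}
  add_mem' := by
    intro a b ha hb
    simp only [Set.mem_setOf_eq] at *
    rw [dotProduct_add, ha, hb, add_zero]
  zero_mem' := by
    simp only [Set.mem_setOf_eq, dotProduct_zero]
  neg_mem' := by
    intro a ha
    simp only [Set.mem_setOf_eq] at *
    rw [dotProduct_neg, ha, neg_zero]

/-- Principal divisors: the image of the arithmetical Laplacian. -/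
def PrinSubgroup [Fintype V] [DecidableEq V] (G : SimpleGraph V) [DecidableRel G.Adj]
    (S : V → ℤ) : AddSubgroup (V → ℤ) :=
  Submodule.toAddSubgroup (LinearMap.range (Matrix.mulVecLin (arithLaplacian G S)))

/-- The arithmetical critical group `Div⁰/Prin`. -/
abbrev CriticalGroup [Fintype V] [DecidableEq V] (G : SimpleGraph V) [DecidableRel G.Adj]
    (R S : V → ℤ) : Type _ :=
  Div0 R ⧸ (PrinSubgroup G S).addSubgroupOf (Div0 R)

end Crit

section Aux

set_option linter.unusedSectionVars false

variable {V₁ V₂ : Type*} [Fintype V₁] [Fintype V₂] [DecidableEq V₁] [DecidableEq V₂]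

/-- fiber degree -/
def fdeg (φ : V₂ → V₁) (μ : V₂ → ℕ) (x : V₁) : ℕ :=
  ∑ v ∈ Finset.univ.filter (fun v => φ v = x), μ v

@[simp] lemma vertexMapMatrix_apply (φ : V₂ → V₁) (v : V₂) (x : V₁) :
    vertexMapMatrix φ v x = if φ v = x then 1 else 0 := rfl

lemma vmm_mulVec (φ : V₂ → V₁) (g : V₁ → ℤ) (v : V₂) :
    (vertexMapMatrix φ *ᵥ g) v = g (φ v) := by
  simp [vertexMapMatrix, Matrix.mulVec, dotProduct, ite_mul]

lemma vmm_mul_apply (φ : V₂ → V₁) (N : Matrix V₁ V₁ ℤ) (v : V₂) (x : V₁) :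
    (vertexMapMatrix φ * N) v x = N (φ v) x := by
  simp [vertexMapMatrix, Matrix.mul_apply, ite_mul]

lemma adj_mul_vmm (G₂ : SimpleGraph V₂) [DecidableRel G₂.Adj] (φ : V₂ → V₁) (v : V₂) (x : V₁) :
    (G₂.adjMatrix ℤ * vertexMapMatrix φ) v x = (locHorizMult G₂ φ v x : ℤ) := by
  rw [Matrix.mul_apply, locHorizMult, Finset.card_filter]
  push_cast
  refine Finset.sum_congr rfl fun w _ => ?_
  by_cases h1 : G₂.Adj v w <;> by_cases h2 : φ w = x <;>
    simp [vertexMapMatrix, h1, h2]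

/-- Key identity: L₂ Φ = D_μ Φ L₁. -/
lemma key_identity (G₁ : SimpleGraph V₁) [DecidableRel G₁.Adj]
    (G₂ : SimpleGraph V₂) [DecidableRel G₂.Adj]
    (φ : V₂ → V₁) (μ : V₂ → ℕ) (hharm : IsHarmonicMorphism G₂ G₁ φ μ) (S₁ : V₁ → ℤ) :
    arithLaplacian G₂ (fun v => (μ v : ℤ) * S₁ (φ v) + (vertMult G₂ φ v : ℤ)) *
        vertexMapMatrix φ
      = Matrix.diagonal (fun v => (μ v : ℤ)) * vertexMapMatrix φ * arithLaplacian G₁ S₁ := by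
  rw [Matrix.mul_assoc]
  ext v x
  rw [arithLaplacian, Matrix.sub_mul, Matrix.sub_apply, Matrix.diagonal_mul,
    adj_mul_vmm, Matrix.diagonal_mul, vmm_mul_apply, arithLaplacian, Matrix.sub_apply,
    Matrix.diagonal_apply, SimpleGraph.adjMatrix_apply]
  by_cases h1 : φ v = x
  · subst h1
    have hv : locHorizMult G₂ φ v (φ v) = vertMult G₂ φ v := rfl
    simp [hv, G₁.irrefl]
  · by_cases h2 : G₁.Adj (φ v) x
    · rw [hharm.2 v x h2]
      simp [h1, h2]
      try ring
    · have h0 : locHorizMult G₂ φ v x = 0 := by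
        rw [locHorizMult, Finset.card_eq_zero, Finset.filter_eq_empty_iff]
        rintro w - ⟨hadj, hwx⟩
        rcases hharm.1 hadj with h | h
        · exact h1 (h.trans hwx)
        · exact h2 (hwx ▸ h)
      simp [h1, h2, h0]


lemma card_pairs (G₁ : SimpleGraph V₁) (G₂ : SimpleGraph V₂) [DecidableRel G₂.Adj]
    (φ : V₂ → V₁) (μ : V₂ → ℕ) (hharm : IsHarmonicMorphism G₂ G₁ φ μ)
    {x y : V₁} (hxy : G₁.Adj x y) :
    (Finset.univ.filter fun p : V₂ × V₂ => G₂.Adj p.1 p.2 ∧ φ p.1 = x ∧ φ p.2 = y).card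
      = fdeg φ μ x := by
  rw [Finset.card_eq_sum_card_fiberwise (f := Prod.fst)
    (t := Finset.univ.filter fun v => φ v = x) (fun p hp => by
      simp only [Finset.mem_coe, Finset.mem_filter, Finset.mem_univ, true_and] at hp ⊢
      exact hp.2.1)]
  unfold fdeg
  refine Finset.sum_congr rfl fun v hv => ?_
  simp only [Finset.mem_filter, Finset.mem_univ, true_and] at hv
  rw [← hharm.2 v y (hv ▸ hxy)]
  unfold locHorizMult
  refine Finset.card_nbij' (fun p => p.2) (fun w => (v, w)) ?_ ?_ ?_ ?_
  · intro p hp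
    simp only [Finset.mem_coe, Finset.mem_filter, Finset.mem_univ, true_and] at hp ⊢
    exact ⟨hp.2 ▸ hp.1.1, hp.1.2.2⟩
  · intro w hw
    simp only [Finset.mem_coe, Finset.mem_filter, Finset.mem_univ, true_and] at hw ⊢
    exact ⟨⟨hw.1, hv, hw.2⟩, trivial⟩
  · intro p hp
    simp only [Finset.mem_coe, Finset.mem_filter, Finset.mem_univ, true_and] at hp
    exact Prod.ext hp.2.symm rfl
  · intro w hw
    rfl

lemma fdeg_adj (G₁ : SimpleGraph V₁) (G₂ : SimpleGraph V₂) [DecidableRel G₂.Adj]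
    (φ : V₂ → V₁) (μ : V₂ → ℕ) (hharm : IsHarmonicMorphism G₂ G₁ φ μ)
    {x y : V₁} (hxy : G₁.Adj x y) : fdeg φ μ x = fdeg φ μ y := by
  rw [← card_pairs G₁ G₂ φ μ hharm hxy, ← card_pairs G₁ G₂ φ μ hharm hxy.symm]
  refine Finset.card_nbij' Prod.swap Prod.swap ?_ ?_ ?_ ?_ <;>
    simp only [Set.MapsTo, Set.LeftInvOn, Set.RightInvOn, Finset.mem_coe, Finset.mem_filter, Finset.mem_univ, true_and, Prod.fst_swap, Prod.snd_swap,
      Prod.swap_swap]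
  · rintro p ⟨h1, h2, h3⟩; exact ⟨h1.symm, h3, h2⟩
  · rintro p ⟨h1, h2, h3⟩; exact ⟨h1.symm, h3, h2⟩
  · intro _ _; trivial
  · intro _ _; trivial

lemma fdeg_const (G₁ : SimpleGraph V₁) (G₂ : SimpleGraph V₂) [DecidableRel G₂.Adj]
    (φ : V₂ → V₁) (μ : V₂ → ℕ) (hharm : IsHarmonicMorphism G₂ G₁ φ μ)
    (hconn₁ : G₁.Connected) (x y : V₁) : fdeg φ μ x = fdeg φ μ y := by
  obtain ⟨p⟩ := hconn₁.preconnected x y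
  induction p with
  | nil => rfl
  | cons h _ ih => exact (fdeg_adj G₁ G₂ φ μ hharm h).trans ih

lemma exists_adj_ne (G₂ : SimpleGraph V₂) (hconn₂ : G₂.Connected)
    (φ : V₂ → V₁) (hnc : ∃ v w : V₂, φ v ≠ φ w) :
    ∃ a b : V₂, G₂.Adj a b ∧ φ a ≠ φ b := by
  obtain ⟨v, w, hvw⟩ := hnc
  obtain ⟨p⟩ := hconn₂.preconnected v w
  induction p with
  | nil => exact absurd rfl hvw
  | @cons a b c h p ih =>
    by_cases hab : φ a = φ b
    · exact ih (fun hbc => hvw (hab.trans hbc))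
    · exact ⟨a, b, h, hab⟩

lemma fdeg_pos (G₁ : SimpleGraph V₁) (G₂ : SimpleGraph V₂) [DecidableRel G₂.Adj]
    (φ : V₂ → V₁) (μ : V₂ → ℕ) (hharm : IsHarmonicMorphism G₂ G₁ φ μ)
    (hconn₁ : G₁.Connected) (hconn₂ : G₂.Connected)
    (hnc : ∃ v w : V₂, φ v ≠ φ w) (x : V₁) : 0 < fdeg φ μ x := by
  obtain ⟨a, b, hab, hne⟩ := exists_adj_ne G₂ hconn₂ φ hnc
  have hadj : G₁.Adj (φ a) (φ b) := (hharm.1 hab).resolve_left hne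
  have hμ : 0 < μ a := by
    rw [← hharm.2 a (φ b) hadj]
    exact Finset.card_pos.mpr ⟨b, by simp [hab]⟩
  have hpos : 0 < fdeg φ μ (φ a) :=
    lt_of_lt_of_le hμ (Finset.single_le_sum (f := μ) (fun _ _ => Nat.zero_le _) (by simp))
  rwa [fdeg_const G₁ G₂ φ μ hharm hconn₁ x (φ a)]

lemma fiber_nonempty (G₁ : SimpleGraph V₁) (G₂ : SimpleGraph V₂) [DecidableRel G₂.Adj]
    (φ : V₂ → V₁) (μ : V₂ → ℕ) (hharm : IsHarmonicMorphism G₂ G₁ φ μ)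
    (hconn₁ : G₁.Connected) (hconn₂ : G₂.Connected)
    (hnc : ∃ v w : V₂, φ v ≠ φ w) (x : V₁) : ∃ v, φ v = x := by
  by_contra h
  push_neg at h
  have : fdeg φ μ x = 0 := by
    unfold fdeg
    rw [Finset.filter_false_of_mem (fun v _ => h v), Finset.sum_empty]
  have := fdeg_pos G₁ G₂ φ μ hharm hconn₁ hconn₂ hnc x
  omega


lemma phiT_D_phi (φ : V₂ → V₁) (μ : V₂ → ℕ) (d : ℕ) (hd : ∀ x, fdeg φ μ x = d) :
    (vertexMapMatrix φ)ᵀ * (Matrix.diagonal (fun v => (μ v : ℤ)) * vertexMapMatrix φ)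
      = (d : ℤ) • (1 : Matrix V₁ V₁ ℤ) := by
  ext x y
  rw [Matrix.mul_apply]
  by_cases hxy : x = y
  · subst hxy
    rw [Matrix.smul_apply, Matrix.one_apply_eq, smul_eq_mul, mul_one, ← hd x]
    have h1 : ∀ v : V₂, (vertexMapMatrix φ)ᵀ x v
        * ((Matrix.diagonal (fun v => (μ v : ℤ)) * vertexMapMatrix φ) v x)
        = if φ v = x then (μ v : ℤ) else 0 := by
      intro v
      rw [Matrix.diagonal_mul, Matrix.transpose_apply]
      by_cases h : φ v = x <;> simp [h]
    rw [Finset.sum_congr rfl fun v _ => h1 v, ← Finset.sum_filter]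
    unfold fdeg
    push_cast
    rfl
  · rw [Matrix.smul_apply, Matrix.one_apply_ne hxy, smul_eq_mul, mul_zero]
    refine Finset.sum_eq_zero fun v _ => ?_
    rw [Matrix.diagonal_mul, Matrix.transpose_apply]
    by_cases h1 : φ v = x <;> by_cases h2 : φ v = y <;>
      simp [h1, h2] <;>
      intro h <;> exact absurd (h ▸ rfl) hxy

lemma lap_transpose {V : Type*} [Fintype V] [DecidableEq V] (G : SimpleGraph V)
    [DecidableRel G.Adj] (S : V → ℤ) : (arithLaplacian G S)ᵀ = arithLaplacian G S := by
  unfold arithLaplacian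
  rw [Matrix.transpose_sub, Matrix.diagonal_transpose, SimpleGraph.transpose_adjMatrix]

lemma key_identity_T (G₁ : SimpleGraph V₁) [DecidableRel G₁.Adj]
    (G₂ : SimpleGraph V₂) [DecidableRel G₂.Adj]
    (φ : V₂ → V₁) (μ : V₂ → ℕ) (hharm : IsHarmonicMorphism G₂ G₁ φ μ) (S₁ : V₁ → ℤ) :
    (vertexMapMatrix φ)ᵀ *
        arithLaplacian G₂ (fun v => (μ v : ℤ) * S₁ (φ v) + (vertMult G₂ φ v : ℤ))
      = arithLaplacian G₁ S₁ *
          ((vertexMapMatrix φ)ᵀ * Matrix.diagonal (fun v => (μ v : ℤ))) := by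
  have h := congrArg Matrix.transpose (key_identity G₁ G₂ φ μ hharm S₁)
  rw [Matrix.transpose_mul, Matrix.transpose_mul, Matrix.transpose_mul,
    Matrix.diagonal_transpose, lap_transpose, lap_transpose] at h
  exact h



/-- Kernel of a Laplacian-type operator on a connected graph is spanned by a
positive null vector. -/
lemma kernel_span {V : Type*} [Fintype V] [DecidableEq V]
    (G : SimpleGraph V) [DecidableRel G.Adj] (hconn : G.Connected)
    (S R z : V → ℚ) (hR : ∀ v, 0 < R v)
    (hLR : ∀ v, S v * R v = ∑ w ∈ G.neighborFinset v, R w)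
    (hLz : ∀ v, S v * z v = ∑ w ∈ G.neighborFinset v, z w) :
    ∃ q : ℚ, ∀ v, z v = q * R v := by
  have hne : Nonempty V := hconn.nonempty
  obtain ⟨v₀, -, hmax⟩ := Finset.exists_max_image (Finset.univ : Finset V)
    (fun v => z v / R v) Finset.univ_nonempty
  set q := z v₀ / R v₀ with hq
  have hle : ∀ v, z v ≤ q * R v := fun v =>
    (div_le_iff₀ (hR v)).mp (hmax v (Finset.mem_univ v))
  have hstep : ∀ v, z v = q * R v → ∀ w, G.Adj v w → z w = q * R w := by
    intro v hv w hw
    have hsum : ∑ u ∈ G.neighborFinset v, (q * R u - z u) = 0 := by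
      rw [Finset.sum_sub_distrib, ← Finset.mul_sum, ← hLR v, ← hLz v, hv]
      ring
    have h0 := (Finset.sum_eq_zero_iff_of_nonneg
      (fun u _ => sub_nonneg.mpr (hle u))).mp hsum w (by rwa [SimpleGraph.mem_neighborFinset])
    linarith
  have hwalk : ∀ {a b : V}, G.Walk a b → z a = q * R a → z b = q * R b := by
    intro a b p
    induction p with
    | nil => exact id
    | cons h _ ih => exact fun ha => ih (hstep _ ha _ h)
  refine ⟨q, fun v => ?_⟩
  have hv₀ : z v₀ = q * R v₀ := (div_mul_cancel₀ _ (ne_of_gt (hR v₀))).symm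
  obtain ⟨p⟩ := hconn.preconnected v₀ v
  exact hwalk p hv₀

end Aux

section Cast

variable {V W : Type*}

def castV (f : V → ℤ) : V → ℚ := fun v => (f v : ℚ)

def castM (M : Matrix V W ℤ) : Matrix V W ℚ := M.map (Int.castRingHom ℚ)

lemma castV_inj : Function.Injective (castV (V := V)) := fun f g h =>
  funext fun v => Int.cast_injective (congrFun h v)

lemma castM_mulVec [Fintype W] (M : Matrix V W ℤ) (f : W → ℤ) :
    castM M *ᵥ castV f = castV (M *ᵥ f) := by
  funext v
  exact (RingHom.map_mulVec (Int.castRingHom ℚ) M f v).symm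

lemma castM_mul {X : Type*} [Fintype W] (M : Matrix V W ℤ) (N : Matrix W X ℤ) :
    castM (M * N) = castM M * castM N := Matrix.map_mul

lemma castM_lap [Fintype V] [DecidableEq V] (G : SimpleGraph V) [DecidableRel G.Adj]
    (S : V → ℤ) :
    castM (arithLaplacian G S) = Matrix.diagonal (castV S) - G.adjMatrix ℚ := by
  ext i j
  simp only [castM, arithLaplacian, Matrix.map_apply, Matrix.sub_apply,
    Matrix.diagonal_apply, SimpleGraph.adjMatrix_apply, castV]
  by_cases h1 : i = j <;> by_cases h2 : G.Adj i j <;> simp [h1, h2]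

lemma castV_zero : castV (0 : V → ℤ) = 0 := by
  funext v; simp [castV]

end Cast


section Main

variable {V₁ V₂ : Type*} [Fintype V₁] [Fintype V₂] [DecidableEq V₁] [DecidableEq V₂]

lemma main_principal (G₁ : SimpleGraph V₁) [DecidableRel G₁.Adj]
    (G₂ : SimpleGraph V₂) [DecidableRel G₂.Adj]
    (hconn₁ : G₁.Connected) (hconn₂ : G₂.Connected)
    (φ : V₂ → V₁) (μ : V₂ → ℕ)
    (hharm : IsHarmonicMorphism G₂ G₁ φ μ)
    (hnc : ∃ v w : V₂, φ v ≠ φ w)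
    (R₁ S₁ : V₁ → ℤ) (hA₁ : IsArithStructure G₁ R₁ S₁)
    (ξ : V₁ → ℤ)
    (f : V₂ → ℤ)
    (hf : (Matrix.diagonal (fun v => (μ v : ℤ)) * vertexMapMatrix φ) *ᵥ ξ =
        arithLaplacian G₂ (fun v => (μ v : ℤ) * S₁ (φ v) + (vertMult G₂ φ v : ℤ)) *ᵥ f) :
    ∃ g : V₁ → ℤ, ξ = arithLaplacian G₁ S₁ *ᵥ g := by
  classical
  obtain ⟨hR₁pos, hS₁pos, hgcd, hLR₁⟩ := hA₁
  set Φ : Matrix V₂ V₁ ℤ := vertexMapMatrix φ with hΦdef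
  set Dμ : Matrix V₂ V₂ ℤ := Matrix.diagonal (fun v => (μ v : ℤ)) with hDdef
  set S₂ : V₂ → ℤ := fun v => (μ v : ℤ) * S₁ (φ v) + (vertMult G₂ φ v : ℤ) with hS₂def
  set L₁ : Matrix V₁ V₁ ℤ := arithLaplacian G₁ S₁ with hL₁def
  set L₂ : Matrix V₂ V₂ ℤ := arithLaplacian G₂ S₂ with hL₂def
  set R₂ : V₂ → ℤ := fun v => R₁ (φ v) with hR₂def
  have hkey : L₂ * Φ = Dμ * Φ * L₁ := key_identity G₁ G₂ φ μ hharm S₁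
  have hkeyT : Φᵀ * L₂ = L₁ * (Φᵀ * Dμ) := key_identity_T G₁ G₂ φ μ hharm S₁
  have hneV₁ : Nonempty V₁ := hconn₁.nonempty
  set x₀ : V₁ := Classical.arbitrary V₁ with hx₀
  set d : ℕ := fdeg φ μ x₀ with hd_def
  have hd : ∀ x, fdeg φ μ x = d := fun x => fdeg_const G₁ G₂ φ μ hharm hconn₁ x x₀
  have hd_pos : 0 < d := hd_def ▸ fdeg_pos G₁ G₂ φ μ hharm hconn₁ hconn₂ hnc x₀
  have hdQ : (d : ℚ) ≠ 0 := by exact_mod_cast hd_pos.ne'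
  -- step 1 : d • ξ = L₁ *ᵥ h
  set h : V₁ → ℤ := (Φᵀ * Dμ) *ᵥ f with hh
  have h1 : (d : ℤ) • ξ = L₁ *ᵥ h := by
    have e1 : Φᵀ *ᵥ ((Dμ * Φ) *ᵥ ξ) = (d : ℤ) • ξ := by
      rw [Matrix.mulVec_mulVec, phiT_D_phi φ μ d hd, Matrix.smul_mulVec,
        Matrix.one_mulVec]
    have e2 : Φᵀ *ᵥ (L₂ *ᵥ f) = L₁ *ᵥ h := by
      rw [Matrix.mulVec_mulVec, hkeyT, hh, Matrix.mulVec_mulVec]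
    rw [← e1, hf, e2]
  -- rational side
  set β : V₁ → ℚ := ((d : ℚ))⁻¹ • castV h with hβdef
  have hβ : castM L₁ *ᵥ β = castV ξ := by
    rw [hβdef, Matrix.mulVec_smul, castM_mulVec, ← h1]
    funext v
    simp only [Pi.smul_apply, castV, smul_eq_mul]
    push_cast
    field_simp
  have hΦq : ∀ (u : V₁ → ℚ) (v : V₂), (castM Φ *ᵥ u) v = u (φ v) := by
    intro u v
    simp [castM, Matrix.mulVec, dotProduct, Matrix.map_apply, hΦdef,
      vertexMapMatrix_apply, apply_ite (fun z : ℤ => (z : ℚ)), ite_mul]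
  set z : V₂ → ℚ := castV f - castM Φ *ᵥ β with hzdef
  have hz : castM L₂ *ᵥ z = 0 := by
    rw [hzdef, Matrix.mulVec_sub]
    have t1 : castM L₂ *ᵥ castV f = castM (Dμ * Φ) *ᵥ castV ξ := by
      rw [castM_mulVec, castM_mulVec, hf]
    have t2 : castM L₂ *ᵥ (castM Φ *ᵥ β) = castM (Dμ * Φ) *ᵥ castV ξ := by
      rw [Matrix.mulVec_mulVec, ← castM_mul, hkey, castM_mul (Dμ * Φ) L₁,
        ← Matrix.mulVec_mulVec, hβ]
    rw [t1, t2, sub_self]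
  -- laplacian components over ℚ
  have hcomp : ∀ (u : V₂ → ℚ), castM L₂ *ᵥ u = 0 →
      ∀ v, castV S₂ v * u v = ∑ w ∈ G₂.neighborFinset v, u w := by
    intro u hu v
    have := congrFun hu v
    rw [hL₂def, castM_lap, Matrix.sub_mulVec, Pi.sub_apply, Matrix.mulVec_diagonal,
      SimpleGraph.adjMatrix_mulVec_apply] at this
    have : castV S₂ v * u v - ∑ w ∈ G₂.neighborFinset v, u w = 0 := this
    linarith
  have hLR₂ : L₂ *ᵥ R₂ = 0 := by
    have hΦR : Φ *ᵥ R₁ = R₂ := funext fun v => vmm_mulVec φ R₁ v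
    rw [← hΦR, Matrix.mulVec_mulVec, hkey, ← Matrix.mulVec_mulVec, hLR₁,
      Matrix.mulVec_zero]
  have hLR₂Q : castM L₂ *ᵥ castV R₂ = 0 := by
    rw [castM_mulVec, hLR₂, castV_zero]
  obtain ⟨q, hq⟩ := kernel_span G₂ hconn₂ (castV S₂) (castV R₂) z
    (fun v => by simp only [castV, hR₂def]; exact_mod_cast hR₁pos (φ v))
    (hcomp _ hLR₂Q) (hcomp _ hz)
  -- choose sections of the fibers
  choose sec hsec using fiber_nonempty G₁ G₂ φ μ hharm hconn₁ hconn₂ hnc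
  set g : V₁ → ℤ := fun x => f (sec x) with hgdef
  have hg : castV g = β + q • castV R₁ := by
    funext x
    have h2 := hq (sec x)
    rw [hzdef] at h2
    have h3 : castV f (sec x) - β (φ (sec x)) = q * castV R₂ (sec x) := by
      rw [← hΦq β (sec x)]; exact h2
    rw [hsec x] at h3
    have h4 : castV R₂ (sec x) = castV R₁ x := by
      simp only [castV, hR₂def, hsec x]
    rw [h4] at h3
    simp only [Pi.add_apply, Pi.smul_apply, smul_eq_mul, castV, hgdef]
    have : ((f (sec x) : ℚ)) = β x + q * (R₁ x : ℚ) := by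
      have := h3
      simp only [castV] at this
      linarith
    exact this
  refine ⟨g, castV_inj ?_⟩
  have hLRQ : castM L₁ *ᵥ castV R₁ = 0 := by
    rw [castM_mulVec, hLR₁, castV_zero]
  rw [← castM_mulVec, hg, Matrix.mulVec_add]
  have e3 : castM L₁ *ᵥ (q • castV R₁) = 0 := by
    rw [Matrix.mulVec_smul, hLRQ, smul_zero]
  rw [e3, add_zero, hβ]

end Main

/-- Theorem `injective`. The pullback `φ*ξ = D_μΦξ` induces an
injective group homomorphism `K(Γ₁;R₁,S₁) → K(Γ₂;R₂,S₂)`: explicitly, if `ξ` is a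
degree-0 divisor on `Γ₁` with `D_μΦξ = L₂f` principal, then `ξ` is principal. -/
theorem pullback_critical_group_injective {V₁ V₂ : Type*} [Fintype V₁] [Fintype V₂]
    [DecidableEq V₁] [DecidableEq V₂]
    (G₁ : SimpleGraph V₁) [DecidableRel G₁.Adj] (G₂ : SimpleGraph V₂) [DecidableRel G₂.Adj]
    (hconn₁ : G₁.Connected) (hconn₂ : G₂.Connected)
    (hcard₁ : 2 ≤ Fintype.card V₁) (hcard₂ : 2 ≤ Fintype.card V₂)
    (φ : V₂ → V₁) (μ : V₂ → ℕ)
    (hharm : IsHarmonicMorphism G₂ G₁ φ μ)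
    (hnc : ∃ v w : V₂, φ v ≠ φ w)
    (R₁ S₁ : V₁ → ℤ) (hA₁ : IsArithStructure G₁ R₁ S₁) :
    (∃ ψ : CriticalGroup G₁ R₁ S₁ →+
            CriticalGroup G₂ (fun v => R₁ (φ v))
              (fun v => (μ v : ℤ) * S₁ (φ v) + (vertMult G₂ φ v : ℤ)),
        Function.Injective ψ ∧
          ∀ (ξ : Div0 R₁) (δ : Div0 (fun v => R₁ (φ v))),
            (Matrix.diagonal (fun v => (μ v : ℤ)) * vertexMapMatrix φ) *ᵥ (ξ : V₁ → ℤ) =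
                (δ : V₂ → ℤ) →
              ψ (QuotientAddGroup.mk ξ) = QuotientAddGroup.mk δ) ∧
      ∀ ξ : V₁ → ℤ, R₁ ⬝ᵥ ξ = 0 →
        (∃ f : V₂ → ℤ,
            (Matrix.diagonal (fun v => (μ v : ℤ)) * vertexMapMatrix φ) *ᵥ ξ =
              arithLaplacian G₂
                  (fun v => (μ v : ℤ) * S₁ (φ v) + (vertMult G₂ φ v : ℤ)) *ᵥ f) →
          ∃ g : V₁ → ℤ, ξ = arithLaplacian G₁ S₁ *ᵥ g := by
  classical
  have hmain : ∀ ξ : V₁ → ℤ, R₁ ⬝ᵥ ξ = 0 →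
      (∃ f : V₂ → ℤ,
          (Matrix.diagonal (fun v => (μ v : ℤ)) * vertexMapMatrix φ) *ᵥ ξ =
            arithLaplacian G₂
                (fun v => (μ v : ℤ) * S₁ (φ v) + (vertMult G₂ φ v : ℤ)) *ᵥ f) →
      ∃ g : V₁ → ℤ, ξ = arithLaplacian G₁ S₁ *ᵥ g := by
    rintro ξ hξ ⟨f, hf⟩
    exact main_principal G₁ G₂ hconn₁ hconn₂ φ μ hharm hnc R₁ S₁ hA₁ ξ f hf
  refine ⟨?_, hmain⟩
  have hneV₁ : Nonempty V₁ := hconn₁.nonempty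
  obtain ⟨x₀⟩ := hneV₁
  have hd : ∀ x, fdeg φ μ x = fdeg φ μ x₀ :=
    fun x => fdeg_const G₁ G₂ φ μ hharm hconn₁ x x₀
  set d : ℕ := fdeg φ μ x₀ with hd_def
  -- the pullback maps Div0 R₁ to Div0 R₂
  have hMdiv : ∀ ξ : V₁ → ℤ, R₁ ⬝ᵥ ξ = 0 →
      (fun v => R₁ (φ v)) ⬝ᵥ
        ((Matrix.diagonal (fun v => (μ v : ℤ)) * vertexMapMatrix φ) *ᵥ ξ) = 0 := by
    intro ξ hξ
    rw [Matrix.dotProduct_mulVec]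
    have hvm : ((fun v => R₁ (φ v)) ᵥ*
        (Matrix.diagonal (fun v => (μ v : ℤ)) * vertexMapMatrix φ)) = fun x => (d : ℤ) * R₁ x := by
      funext x
      have hsum : (∑ v ∈ Finset.univ.filter (fun v => φ v = x), (μ v : ℤ)) = (d : ℤ) := by
        rw [← hd x]
        unfold fdeg
        push_cast
        rfl
      calc ((fun v => R₁ (φ v)) ᵥ*
            (Matrix.diagonal (fun v => (μ v : ℤ)) * vertexMapMatrix φ)) x
          = ∑ v, R₁ (φ v) * ((μ v : ℤ) * if φ v = x then 1 else 0) := by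
            simp [Matrix.vecMul, dotProduct, Matrix.diagonal_mul]
        _ = ∑ v, (if φ v = x then (μ v : ℤ) * R₁ x else 0) := by
            refine Finset.sum_congr rfl fun v _ => ?_
            by_cases hvx : φ v = x
            · rw [hvx]; simp; ring
            · simp [hvx]
        _ = ∑ v ∈ Finset.univ.filter (fun v => φ v = x), (μ v : ℤ) * R₁ x := by
            rw [Finset.sum_filter]
        _ = (∑ v ∈ Finset.univ.filter (fun v => φ v = x), (μ v : ℤ)) * R₁ x := by
            rw [Finset.sum_mul]
        _ = (d : ℤ) * R₁ x := by rw [hsum]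
    rw [hvm]
    have : (fun x => (d : ℤ) * R₁ x) ⬝ᵥ ξ = (d : ℤ) * (R₁ ⬝ᵥ ξ) := by
      simp [dotProduct, Finset.mul_sum, mul_assoc]
    rw [this, hξ, mul_zero]
  -- the pullback of a principal divisor is principal
  have hprin : ∀ g : V₁ → ℤ,
      (Matrix.diagonal (fun v => (μ v : ℤ)) * vertexMapMatrix φ) *ᵥ (arithLaplacian G₁ S₁ *ᵥ g)
        = arithLaplacian G₂
            (fun v => (μ v : ℤ) * S₁ (φ v) + (vertMult G₂ φ v : ℤ)) *ᵥ (vertexMapMatrix φ *ᵥ g) := by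
    intro g
    rw [Matrix.mulVec_mulVec, Matrix.mulVec_mulVec, key_identity G₁ G₂ φ μ hharm S₁]
  -- the group homomorphism on Div0
  let P : Div0 R₁ →+ Div0 (fun v => R₁ (φ v)) :=
  { toFun := fun ξ =>
      ⟨(Matrix.diagonal (fun v => (μ v : ℤ)) * vertexMapMatrix φ) *ᵥ (ξ : V₁ → ℤ),
        hMdiv _ ξ.2⟩
    map_zero' := Subtype.ext (by simp [Matrix.mulVec_zero])
    map_add' := fun a b => Subtype.ext (by simp [Matrix.mulVec_add]) }
  let ψ₀ : Div0 R₁ →+ CriticalGroup G₂ (fun v => R₁ (φ v))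
      (fun v => (μ v : ℤ) * S₁ (φ v) + (vertMult G₂ φ v : ℤ)) :=
    (QuotientAddGroup.mk'
      ((PrinSubgroup G₂ (fun v => (μ v : ℤ) * S₁ (φ v) + (vertMult G₂ φ v : ℤ))).addSubgroupOf
        (Div0 (fun v => R₁ (φ v))))).comp P
  have hker : ∀ ξ ∈ (PrinSubgroup G₁ S₁).addSubgroupOf (Div0 R₁), ψ₀ ξ = 0 := by
    intro ξ hξ
    rw [AddSubgroup.mem_addSubgroupOf] at hξ
    rw [PrinSubgroup, Submodule.mem_toAddSubgroup, LinearMap.mem_range] at hξ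
    obtain ⟨g, hg⟩ := hξ
    rw [Matrix.mulVecLin_apply] at hg
    apply (QuotientAddGroup.eq_zero_iff _).mpr
    rw [AddSubgroup.mem_addSubgroupOf]
    rw [PrinSubgroup, Submodule.mem_toAddSubgroup, LinearMap.mem_range]
    refine ⟨vertexMapMatrix φ *ᵥ g, ?_⟩
    rw [Matrix.mulVecLin_apply, ← hprin g, hg]
    rfl
  let ψ : CriticalGroup G₁ R₁ S₁ →+ CriticalGroup G₂ (fun v => R₁ (φ v))
      (fun v => (μ v : ℤ) * S₁ (φ v) + (vertMult G₂ φ v : ℤ)) :=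
    QuotientAddGroup.lift _ ψ₀ hker
  have hψmk : ∀ ξ : Div0 R₁, ψ (QuotientAddGroup.mk ξ) = QuotientAddGroup.mk (P ξ) :=
    fun ξ => rfl
  refine ⟨ψ, ?_, ?_⟩
  · rw [injective_iff_map_eq_zero]
    intro a
    induction a using QuotientAddGroup.induction_on with
    | H ξ =>
      intro ha
      rw [hψmk ξ] at ha
      have hmem := (QuotientAddGroup.eq_zero_iff _).mp ha
      rw [AddSubgroup.mem_addSubgroupOf] at hmem
      rw [PrinSubgroup, Submodule.mem_toAddSubgroup, LinearMap.mem_range] at hmem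
      obtain ⟨f, hf⟩ := hmem
      rw [Matrix.mulVecLin_apply] at hf
      obtain ⟨g, hg⟩ := hmain ξ ξ.2 ⟨f, hf.symm⟩
      apply (QuotientAddGroup.eq_zero_iff _).mpr
      rw [AddSubgroup.mem_addSubgroupOf]
      rw [PrinSubgroup, Submodule.mem_toAddSubgroup, LinearMap.mem_range]
      exact ⟨g, by rw [Matrix.mulVecLin_apply, ← hg]⟩
  · intro ξ δ hδ
    rw [hψmk ξ]
    exact congrArg QuotientAddGroup.mk (Subtype.ext hδ)
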